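/- arXiv:math/0005079 — 2 statements merged into one kernel-verified Lean document; each statement's English description precedes it below -/
import Mathlib

section
/- Let H be an index-two normal subgroup of a finite group K and let U be an irreducible real H-module of real type (i.e. End_H(U) ≅ R) whose character is K-invariant. If U admits a K-extension, then there are exactly two isomorphism classes of K-extensions of U, and both are of real type. -/
open Module

/-- Restriction of a representation to a subgroup. -/
def resRep {K : Type*} [Group K] (H : Subgroup K) {U : Type*} [AddCommGroup U] [Module ℝ U]
    (ψ : Representation ℝ K U) : Representation ℝ H U :=
  ψ.comp H.subtype

/-- A representation is irreducible: nonzero space and no proper nonzero invariant submodule. -/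
def IsIrreducibleRep {G U : Type*} [Group G] [AddCommGroup U] [Module ℝ U]
    (ρ : Representation ℝ G U) : Prop :=
  (∃ u : U, u ≠ 0) ∧
    ∀ p : Submodule ℝ U, (∀ (g : G) (u : U), u ∈ p → ρ g u ∈ p) → p = ⊥ ∨ p = ⊤

/-- The space of equivariant linear maps between two representations. -/
def repHom {G U V : Type*} [Group G] [AddCommGroup U] [Module ℝ U] [AddCommGroup V]
    [Module ℝ V] (ρ : Representation ℝ G U) (ψ : Representation ℝ G V) :
    Submodule ℝ (U →ₗ[ℝ] V) where
  carrier := {f | ∀ (g : G) (u : U), f (ρ g u) = ψ g (f u)}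
  add_mem' := by
    intro f f' hf hf' g u
    simp [hf g u, hf' g u]
  zero_mem' := by intro g u; simp
  smul_mem' := by
    intro c f hf g u
    simp [hf g u]

/-- Isomorphism of representations. -/
def RepIso {G U V : Type*} [Group G] [AddCommGroup U] [Module ℝ U] [AddCommGroup V]
    [Module ℝ V] (ρ : Representation ℝ G U) (ψ : Representation ℝ G V) : Prop :=
  ∃ e : U ≃ₗ[ℝ] V, ∀ (g : G) (u : U), e (ρ g u) = ψ g (e u)

/-- The character of a representation of a subgroup is invariant under conjugation by the
ambient group. -/
def charConjInvariant {K U : Type*} [Group K] [AddCommGroup U] [Module ℝ U] (H : Subgroup K)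
    (ρ : Representation ℝ H U) : Prop :=
  ∀ (g : K) (h k : H), (k : K) = g⁻¹ * h * g →
    LinearMap.trace ℝ U (ρ k) = LinearMap.trace ℝ U (ρ h)

/-- The carrier of the induced representation `Ind_H^K U`. -/
def indSubmodule {K U : Type*} [Group K] [AddCommGroup U] [Module ℝ U] (H : Subgroup K)
    (ρ : Representation ℝ H U) : Submodule ℝ (K → U) where
  carrier := {f | ∀ (h : H) (k : K), f (h * k) = ρ h (f k)}
  add_mem' := by
    intro f f' hf hf' h k
    simp [hf h k, hf' h k]
  zero_mem' := by intro h k; simp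
  smul_mem' := by
    intro c f hf h k
    simp [hf h k]

/-- The induced representation `Ind_H^K U`. -/
def indRep {K U : Type*} [Group K] [AddCommGroup U] [Module ℝ U] (H : Subgroup K)
    (ρ : Representation ℝ H U) : Representation ℝ K (indSubmodule H ρ) where
  toFun g :=
    { toFun := fun f => ⟨fun k => f.1 (k * g), by
        intro h k
        dsimp only
        rw [mul_assoc]
        exact f.2 h (k * g)⟩
      map_add' := by intro f f'; rfl
      map_smul' := by intro c f; rfl }
  map_one' := by
    refine LinearMap.ext fun f => Subtype.ext (funext fun k => ?_)
    simp
  map_mul' := by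
    intro g g'
    refine LinearMap.ext fun f => Subtype.ext (funext fun k => ?_)
    simp [mul_assoc]

/-- The direct sum of two copies of a representation. -/
def doubleRep {G U : Type*} [Group G] [AddCommGroup U] [Module ℝ U]
    (ρ : Representation ℝ G U) : Representation ℝ G (U × U) where
  toFun g := (ρ g).prodMap (ρ g)
  map_one' := by
    refine LinearMap.ext fun u => ?_
    simp
  map_mul' := by
    intro g g'
    refine LinearMap.ext fun u => ?_
    simp [Module.End.mul_apply]

/-- The real dimension of the space of equivariant linear maps. -/
noncomputable def dimRepHom {G U V : Type*} [Group G] [AddCommGroup U] [Module ℝ U]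
    [AddCommGroup V] [Module ℝ V] (ρ : Representation ℝ G U)
    (ψ : Representation ℝ G V) : ℕ :=
  Module.finrank ℝ (repHom ρ ψ)

/-!
Two extensions `σ, ψ` of `ρ` on the same space differ by scalars: for every `g`, the map
`ψ g ∘ σ g⁻¹` commutes with `H` (as `H` is normal), so it is a scalar `c_g` because `ρ` is of
real type. Writing `K = H ∪ H g₀`, all `c_g` with `g ∉ H` equal `c := c_{g₀}`, and `g₀² ∈ H`
forces `c² = 1`; hence `ψ = σ` or `ψ` is the twist of `σ` by the sign character of `K / H`.
These two are not isomorphic, since an isomorphism is an `H`-map, hence a nonzero scalar, which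
cannot anticommute with `σ g₀`. Every endomorphism of an extension is an `H`-endomorphism, hence
a scalar, so both extensions are of real type.
-/

namespace Representation

variable {k G V W : Type*} [CommSemiring k] [Group G] [AddCommMonoid V] [Module k V]
  [AddCommMonoid W] [Module k W]

def twist (χ : G →* k) (σ : Representation k G V) : Representation k G V where
  toFun g := χ g • σ g
  map_one' := by simp
  map_mul' g g' := by rw [map_mul, map_mul, mul_smul, smul_mul_assoc, mul_smul_comm]

@[simp]
lemma twist_apply (χ : G →* k) (σ : Representation k G V) (g : G) :
    σ.twist χ g = χ g • σ g := rfl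

def transport (σ : Representation k G V) (e : V ≃ₗ[k] W) : Representation k G W :=
  (e.conjAlgEquiv k).toAlgHom.toMonoidHom.comp σ

lemma transport_apply (σ : Representation k G V) (e : V ≃ₗ[k] W) (g : G) (w : W) :
    σ.transport e g w = e (σ g (e.symm w)) := rfl

end Representation

open Representation

section Transport

variable {G U V : Type*} [Group G] [AddCommGroup U] [Module ℝ U] [AddCommGroup V] [Module ℝ V]

lemma RepIso.refl (ρ : Representation ℝ G U) : RepIso ρ ρ :=
  ⟨LinearEquiv.refl ℝ U, fun _ _ => rfl⟩

lemma repIso_transport (σ : Representation ℝ G U) (e : U ≃ₗ[ℝ] V) :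
    RepIso σ (σ.transport e) :=
  ⟨e, fun g u => by rw [transport_apply, e.symm_apply_apply]⟩

lemma transport_eq_of_intertwines {σ : Representation ℝ G U} {τ : Representation ℝ G V}
    {e : U ≃ₗ[ℝ] V} (he : ∀ (g : G) (u : U), e (σ g u) = τ g (e u)) : σ.transport e = τ := by
  ext g v
  rw [transport_apply, he, e.apply_symm_apply]

end Transport

section IndexTwo

variable {K : Type*} [Group K] {H : Subgroup K}

open Classical in
noncomputable def indexTwoSign (hidx : H.index = 2) : K →* ℝ where
  toFun g := if g ∈ H then 1 else -1
  map_one' := if_pos H.one_mem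
  map_mul' a b := by
    simp only [Subgroup.mul_mem_iff_of_index_two hidx]
    split_ifs <;> simp_all

lemma indexTwoSign_of_mem (hidx : H.index = 2) {g : K} (hg : g ∈ H) : indexTwoSign hidx g = 1 :=
  if_pos hg

lemma indexTwoSign_of_notMem (hidx : H.index = 2) {g : K} (hg : g ∉ H) :
    indexTwoSign hidx g = -1 :=
  if_neg hg

lemma exists_notMem_of_index_eq_two (hidx : H.index = 2) : ∃ g : K, g ∉ H := by
  by_contra! h
  have : H.index = 1 := Subgroup.index_eq_one.mpr (H.eq_top_iff'.mpr h)
  omega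

variable {U : Type*} [AddCommGroup U] [Module ℝ U]

lemma resRep_twist_indexTwoSign (hidx : H.index = 2) (σ : Representation ℝ K U) :
    resRep H (σ.twist (indexTwoSign hidx)) = resRep H σ := by
  ext h u
  simp [resRep, indexTwoSign_of_mem hidx h.2]

end IndexTwo

section RealType

variable {G U : Type*} [Group G] [AddCommGroup U] [Module ℝ U] {ρ : Representation ℝ G U}

lemma nontrivial_of_dimRepHom_self_eq_one (hρ : dimRepHom ρ ρ = 1) : Nontrivial U := by
  by_contra hU
  rw [not_nontrivial_iff_subsingleton] at hU
  simp [dimRepHom, finrank_zero_of_subsingleton] at hρ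

lemma span_id_le_repHom (ρ : Representation ℝ G U) : ℝ ∙ LinearMap.id ≤ repHom ρ ρ :=
  (Submodule.span_singleton_le_iff_mem _ _).mpr fun _ _ => rfl

lemma exists_eq_smul_id_of_mem_repHom (hρ : dimRepHom ρ ρ = 1) {f : U →ₗ[ℝ] U}
    (hf : f ∈ repHom ρ ρ) : ∃ c : ℝ, f = c • LinearMap.id := by
  have := nontrivial_of_dimRepHom_self_eq_one hρ
  have hid : (LinearMap.id : U →ₗ[ℝ] U) ≠ 0 := one_ne_zero
  let id' : repHom ρ ρ := ⟨LinearMap.id, fun _ _ => rfl⟩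
  have hid' : id' ≠ 0 := fun h => hid (congrArg Subtype.val h)
  obtain ⟨c, hc⟩ := (finrank_eq_one_iff_of_nonzero' id' hid').mp hρ ⟨f, hf⟩
  exact ⟨c, (congrArg Subtype.val hc).symm⟩

lemma repHom_self_eq_span_id (hρ : dimRepHom ρ ρ = 1) : repHom ρ ρ = ℝ ∙ LinearMap.id := by
  refine le_antisymm (fun f hf => ?_) (span_id_le_repHom ρ)
  obtain ⟨c, rfl⟩ := exists_eq_smul_id_of_mem_repHom hρ hf
  exact Submodule.smul_mem _ c (Submodule.mem_span_singleton_self _)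

end RealType

section Extensions

variable {K : Type*} [Group K] {H : Subgroup K} {U : Type*} [AddCommGroup U] [Module ℝ U]
  {ρ : Representation ℝ H U} {σ ψ : Representation ℝ K U}

lemma repHom_le_repHom_resRep (σ ψ : Representation ℝ K U) :
    repHom σ ψ ≤ repHom (resRep H σ) (resRep H ψ) :=
  fun _ hf h u => hf h u

lemma dimRepHom_self_eq_one_of_resRep_eq (hρ : dimRepHom ρ ρ = 1) (hσ : resRep H σ = ρ) :
    dimRepHom σ σ = 1 := by
  subst hσ
  have := nontrivial_of_dimRepHom_self_eq_one hρ
  have hid : (LinearMap.id : U →ₗ[ℝ] U) ≠ 0 := one_ne_zero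
  have hspan : repHom σ σ = ℝ ∙ LinearMap.id :=
    le_antisymm ((repHom_le_repHom_resRep σ σ).trans (repHom_self_eq_span_id hρ).le)
      (span_id_le_repHom σ)
  rw [dimRepHom, hspan, finrank_span_singleton hid]

lemma apply_eq_of_resRep_eq (hσ : resRep H σ = ρ) (hψ : resRep H ψ = ρ) {h : K} (hh : h ∈ H) :
    ψ h = σ h :=
  DFunLike.congr_fun (hψ.trans hσ.symm) ⟨h, hh⟩

lemma exists_apply_eq_smul_of_resRep_eq [H.Normal] (hρ : dimRepHom ρ ρ = 1)
    (hσ : resRep H σ = ρ) (hψ : resRep H ψ = ρ) (g : K) : ∃ c : ℝ, ψ g = c • σ g := by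
  have hmem : ψ g * σ g⁻¹ ∈ repHom ρ ρ := by
    intro h u
    have hconj : g⁻¹ * h * g ∈ H := Subgroup.Normal.conj_mem' ‹_› _ h.2 g
    have hh : σ h = ρ h := DFunLike.congr_fun hσ h
    have hcomm : ψ g * σ g⁻¹ * σ h = σ h * (ψ g * σ g⁻¹) := calc
      ψ g * σ g⁻¹ * σ h = ψ g * σ (g⁻¹ * h * g) * σ g⁻¹ := by
          rw [mul_assoc, mul_assoc, ← map_mul, ← map_mul]; congr 2; group
      _ = ψ g * ψ (g⁻¹ * h * g) * σ g⁻¹ := by rw [apply_eq_of_resRep_eq hσ hψ hconj]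
      _ = ψ h * ψ g * σ g⁻¹ := by rw [← map_mul, ← map_mul]; congr 2; group
      _ = σ h * (ψ g * σ g⁻¹) := by rw [apply_eq_of_resRep_eq hσ hψ h.2, mul_assoc]
    rw [hh] at hcomm
    exact LinearMap.congr_fun hcomm u
  obtain ⟨c, hc⟩ := exists_eq_smul_id_of_mem_repHom hρ hmem
  refine ⟨c, ?_⟩
  calc ψ g = ψ g * σ g⁻¹ * σ g := by rw [mul_assoc, ← map_mul, inv_mul_cancel, map_one, mul_one]
    _ = c • σ g := by rw [hc, smul_mul_assoc, ← Module.End.one_eq_id, one_mul]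

lemma eq_or_eq_twist_of_resRep_eq [H.Normal] (hidx : H.index = 2) (hρ : dimRepHom ρ ρ = 1)
    (hσ : resRep H σ = ρ) (hψ : resRep H ψ = ρ) :
    ψ = σ ∨ ψ = σ.twist (indexTwoSign hidx) := by
  obtain ⟨g₀, hg₀⟩ := exists_notMem_of_index_eq_two hidx
  obtain ⟨c, hc⟩ := exists_apply_eq_smul_of_resRep_eq hρ hσ hψ g₀
  have hH : ∀ g ∈ H, ψ g = σ g := fun g hg => apply_eq_of_resRep_eq hσ hψ hg
  have hcoset : ∀ g ∉ H, ψ g = c • σ g := by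
    intro g hg
    have hmem : g * g₀⁻¹ ∈ H := by
      rw [Subgroup.mul_mem_iff_of_index_two hidx, inv_mem_iff]; tauto
    calc ψ g = ψ (g * g₀⁻¹) * ψ g₀ := by rw [← map_mul, inv_mul_cancel_right]
      _ = c • σ g := by rw [hH _ hmem, hc, mul_smul_comm, ← map_mul, inv_mul_cancel_right]
  have hsq : c * c = 1 := by
    have := nontrivial_of_dimRepHom_self_eq_one hρ
    obtain ⟨u, hu⟩ := exists_ne (0 : U)
    have hend : ψ (g₀ * g₀) = (c * c) • σ (g₀ * g₀) := by
      rw [map_mul, hc, smul_mul_smul_comm, ← map_mul]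
    rw [hH _ (Subgroup.mul_self_mem_of_index_two hidx g₀)] at hend
    refine smul_left_injective ℝ hu ?_
    simpa using (LinearMap.congr_fun hend (σ (g₀ * g₀)⁻¹ u)).symm
  rcases mul_self_eq_one_iff.mp hsq with rfl | rfl
  · refine .inl (MonoidHom.ext fun g => ?_)
    by_cases hg : g ∈ H
    · exact hH g hg
    · rw [hcoset g hg, one_smul]
  · refine .inr (MonoidHom.ext fun g => ?_)
    by_cases hg : g ∈ H
    · rw [twist_apply, indexTwoSign_of_mem hidx hg, one_smul, hH g hg]
    · rw [twist_apply, indexTwoSign_of_notMem hidx hg, hcoset g hg]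

lemma not_repIso_twist_indexTwoSign (hidx : H.index = 2) (hρ : dimRepHom ρ ρ = 1)
    (hσ : resRep H σ = ρ) : ¬ RepIso σ (σ.twist (indexTwoSign hidx)) := by
  subst hσ
  rintro ⟨e, he⟩
  obtain ⟨g₀, hg₀⟩ := exists_notMem_of_index_eq_two hidx
  have := nontrivial_of_dimRepHom_self_eq_one hρ
  obtain ⟨u, hu⟩ := exists_ne (0 : U)
  have hmem : e.toLinearMap ∈ repHom (resRep H σ) (resRep H σ) := fun h v => by
    simpa [resRep, indexTwoSign_of_mem hidx h.2] using he h v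
  obtain ⟨c, hc⟩ := exists_eq_smul_id_of_mem_repHom hρ hmem
  have hce : ∀ v, e v = c • v := fun v => LinearMap.congr_fun hc v
  have hanti : c • u = -(c • u) := by
    simpa [hce, indexTwoSign_of_notMem hidx hg₀] using he g₀ (σ g₀⁻¹ u)
  have hc0 : c = 0 := by
    have : c = -c := smul_left_injective ℝ hu (by simpa only [neg_smul] using hanti)
    linarith
  have hzero : e u = 0 := by rw [hce, hc0, zero_smul]
  exact hu (e.map_eq_zero_iff.mp hzero)

end Extensions

theorem two_extensions_of_real_type_general {K : Type} [Group K] (H : Subgroup K)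
    [H.Normal] (hidx : H.index = 2) {U : Type} [AddCommGroup U] [Module ℝ U]
    (ρ : Representation ℝ H U)
    (hreal : dimRepHom ρ ρ = 1)
    (hext : ∃ σ : Representation ℝ K U, RepIso (resRep H σ) ρ) :
    ∃ σ₁ σ₂ : Representation ℝ K U,
      RepIso (resRep H σ₁) ρ ∧ RepIso (resRep H σ₂) ρ ∧ ¬ RepIso σ₁ σ₂ ∧
      dimRepHom σ₁ σ₁ = 1 ∧ dimRepHom σ₂ σ₂ = 1 ∧
      ∀ (W : Type) [AddCommGroup W] [Module ℝ W] (ψ : Representation ℝ K W),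
        RepIso (resRep H ψ) ρ → (RepIso ψ σ₁ ∨ RepIso ψ σ₂) := by
  obtain ⟨σ₀, e, he⟩ := hext
  set σ := σ₀.transport e
  have hσ : resRep H σ = ρ := transport_eq_of_intertwines he
  have hτ : resRep H (σ.twist (indexTwoSign hidx)) = ρ :=
    (resRep_twist_indexTwoSign hidx σ).trans hσ
  refine ⟨σ, σ.twist (indexTwoSign hidx), hσ ▸ .refl _, hτ ▸ .refl _,
    not_repIso_twist_indexTwoSign hidx hreal hσ, dimRepHom_self_eq_one_of_resRep_eq hreal hσ,
    dimRepHom_self_eq_one_of_resRep_eq hreal hτ, ?_⟩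
  rintro W _ _ ψ ⟨f, hf⟩
  rcases eq_or_eq_twist_of_resRep_eq (ψ := ψ.transport f) hidx hreal hσ
      (transport_eq_of_intertwines hf) with h | h
  · exact .inl (h ▸ repIso_transport ψ f)
  · exact .inr (h ▸ repIso_transport ψ f)

/-- Let `H` be an index-two normal subgroup of a finite group `K` and `U`
an irreducible real `H`-module of real type (`d(U) = 1`) with `K`-invariant character.
If `U` admits a `K`-extension, then there are exactly two isomorphism classes of
`K`-extensions of `U`, and both are of real type. -/
theorem two_extensions_of_real_type {K : Type} [Group K] [Finite K] (H : Subgroup K)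
    [H.Normal] (hidx : H.index = 2) {U : Type} [AddCommGroup U] [Module ℝ U]
    [FiniteDimensional ℝ U] (ρ : Representation ℝ H U) (hirr : IsIrreducibleRep ρ)
    (hreal : dimRepHom ρ ρ = 1) (hinv : charConjInvariant H ρ)
    (hext : ∃ σ : Representation ℝ K U, RepIso (resRep H σ) ρ) :
    ∃ σ₁ σ₂ : Representation ℝ K U,
      RepIso (resRep H σ₁) ρ ∧ RepIso (resRep H σ₂) ρ ∧ ¬ RepIso σ₁ σ₂ ∧
      dimRepHom σ₁ σ₁ = 1 ∧ dimRepHom σ₂ σ₂ = 1 ∧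
      ∀ (W : Type) [AddCommGroup W] [Module ℝ W] (ψ : Representation ℝ K W),
        RepIso (resRep H ψ) ρ → (RepIso ψ σ₁ ∨ RepIso ψ σ₂) :=
  two_extensions_of_real_type_general H hidx ρ hreal hext
end

section
/- Let H be an index-two normal subgroup of a finite group K and let U be an irreducible real H-module with K-invariant character that admits no K-extension. Then every real K-module W with Res_H W ≅ 2U (the direct sum of two copies of U) is isomorphic to Ind_H^K U. -/
/-! Let `p₁, p₂ : W → U` be the two `H`-equivariant projections of `W ≅ U ⊕ U`. Frobenius
reciprocity turns `p₁` into a `K`-map `φ : W → Ind_H^K U`, whose kernel is `K`-invariant and lies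
in `ker p₁ ≅ U`. By irreducibility the kernel is `0` or all of `ker p₁`, and in the latter case
`ker p₁` would be a `K`-extension of `U`. So `φ` is injective, and since
`dim Ind_H^K U ≤ 2 dim U = dim W` it is an isomorphism. -/

open Module

section Equivariant

variable {G U V : Type*} [Group G] [AddCommGroup U] [Module ℝ U] [AddCommGroup V] [Module ℝ V]
  {ρ : Representation ℝ G U} {ψ : Representation ℝ G V}

theorem ker_le_comap_of_mem_repHom {f : U →ₗ[ℝ] V} (hf : f ∈ repHom ρ ψ) (g : G) :
    LinearMap.ker f ≤ (LinearMap.ker f).comap (ρ g) := fun u hu => by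
  simp_all [LinearMap.mem_ker, hf g u]

end Equivariant

section Extension

variable {K U V : Type*} [Group K] [AddCommGroup U] [Module ℝ U] [AddCommGroup V] [Module ℝ V]
  {H : Subgroup K} {ρ : Representation ℝ H U}

theorem exists_extension_of_repIso {τ : Representation ℝ K V} (hτ : RepIso (resRep H τ) ρ) :
    ∃ σ : Representation ℝ K U, RepIso (resRep H σ) ρ := by
  obtain ⟨E, hE⟩ := hτ
  refine ⟨(E.conjAlgEquiv ℝ).toAlgHom.toMonoidHom.comp τ, LinearEquiv.refl ℝ U, fun h u => ?_⟩
  exact (hE h (E.symm u)).trans (by rw [E.apply_symm_apply]; rfl)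

theorem IsIrreducibleRep.eq_bot_or_exists_extension (hirr : IsIrreducibleRep ρ)
    {ψ : Representation ℝ K V} {N : Submodule ℝ V} (hN : ∀ g, N ≤ N.comap (ψ g))
    {q : V →ₗ[ℝ] U} (hq : q ∈ repHom (resRep H ψ) ρ) (hqN : Disjoint N (LinearMap.ker q)) :
    N = ⊥ ∨ ∃ σ : Representation ℝ K U, RepIso (resRep H σ) ρ := by
  have hinv : ∀ (h : H) (u : U), u ∈ N.map q → ρ h u ∈ N.map q := by
    rintro h _ ⟨v, hv, rfl⟩
    exact ⟨ψ h v, hN h hv, hq h v⟩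
  refine (hirr.2 _ hinv).imp (fun hbot => ?_) (fun htop => ?_)
  · exact hqN.eq_bot_of_le (LinearMap.le_ker_iff_map.mpr hbot)
  · have hsurj : Function.Surjective (q.domRestrict N) := by
      rw [← LinearMap.range_eq_top, LinearMap.range_domRestrict, htop]
    exact exists_extension_of_repIso (τ := ψ.subrepresentation N hN)
      ⟨.ofBijective _ ⟨LinearMap.injective_domRestrict_iff.mpr hqN, hsurj⟩, fun h v => hq h v⟩

end Extension

section Induced

variable {K U V : Type*} [Group K] [AddCommGroup U] [Module ℝ U] [AddCommGroup V] [Module ℝ V]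
  {H : Subgroup K} {ρ : Representation ℝ H U}

/-- The `K`-map corresponding to the `H`-map `p` under Frobenius reciprocity. -/
def indLift (ψ : Representation ℝ K V) (p : V →ₗ[ℝ] U) (hp : p ∈ repHom (resRep H ψ) ρ) :
    V →ₗ[ℝ] indSubmodule H ρ where
  toFun v := ⟨fun k => p (ψ k v), fun h k => by
    show p (ψ (h * k) v) = ρ h (p (ψ k v))
    rw [map_mul, Module.End.mul_apply]
    exact hp h (ψ k v)⟩
  map_add' v w := Subtype.ext <| funext fun k => by simp
  map_smul' c v := Subtype.ext <| funext fun k => by simp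

variable {ψ : Representation ℝ K V} {p : V →ₗ[ℝ] U} (hp : p ∈ repHom (resRep H ψ) ρ)

theorem indLift_mem_repHom : indLift ψ p hp ∈ repHom ψ (indRep H ρ) := fun g v =>
  Subtype.ext <| funext fun k => by
    show p (ψ k (ψ g v)) = p (ψ (k * g) v)
    rw [map_mul, Module.End.mul_apply]

theorem ker_indLift_le : LinearMap.ker (indLift ψ p hp) ≤ LinearMap.ker p := fun v hv => by
  simpa [indLift] using congrFun (congrArg Subtype.val hv) 1

def indEval (g₀ : K) : indSubmodule H ρ →ₗ[ℝ] U × U :=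
  (LinearMap.proj 1).prod (LinearMap.proj g₀) ∘ₗ (indSubmodule H ρ).subtype

/-- `K` is the union of the cosets `H` and `H g₀`. -/
theorem indEval_injective (hidx : H.index = 2) {g₀ : K} (hg₀ : g₀ ∉ H) :
    Function.Injective (indEval (ρ := ρ) g₀) := by
  rw [← LinearMap.ker_eq_bot, LinearMap.ker_eq_bot']
  intro f hf
  have h1 : f.1 1 = 0 := congrArg Prod.fst hf
  have hg : f.1 g₀ = 0 := congrArg Prod.snd hf
  refine Subtype.ext <| funext fun k => ?_
  by_cases hk : k ∈ H
  · simpa [h1] using f.2 ⟨k, hk⟩ 1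
  · have hkg : k * g₀⁻¹ ∈ H := by
      rw [Subgroup.mul_mem_iff_of_index_two hidx]
      simp [hk, hg₀]
    simpa [hg] using f.2 ⟨k * g₀⁻¹, hkg⟩ g₀

end Induced

theorem extension_of_double_is_induced_general {K : Type} [Group K] (H : Subgroup K)
    (hidx : H.index = 2) {U : Type} [AddCommGroup U] [Module ℝ U]
    [FiniteDimensional ℝ U] (ρ : Representation ℝ H U) (hirr : IsIrreducibleRep ρ)
    (hnoext : ¬ ∃ σ : Representation ℝ K U, RepIso (resRep H σ) ρ) :
    ∀ (W : Type) [AddCommGroup W] [Module ℝ W] (ψ : Representation ℝ K W),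
      RepIso (resRep H ψ) (doubleRep ρ) → RepIso ψ (indRep H ρ) := by
  rintro W _ _ ψ ⟨e, he⟩
  obtain ⟨g₀, hg₀⟩ : ∃ g₀ : K, g₀ ∉ H := by
    by_contra! hH
    simp [(Subgroup.eq_top_iff' H).mpr hH] at hidx
  set p₁ : W →ₗ[ℝ] U := LinearMap.fst ℝ U U ∘ₗ e.toLinearMap
  set p₂ : W →ₗ[ℝ] U := LinearMap.snd ℝ U U ∘ₗ e.toLinearMap
  have hp₁ : p₁ ∈ repHom (resRep H ψ) ρ := fun h w => congrArg Prod.fst (he h w)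
  have hp₂ : p₂ ∈ repHom (resRep H ψ) ρ := fun h w => congrArg Prod.snd (he h w)
  set φ := indLift ψ p₁ hp₁
  have hφ : φ ∈ repHom ψ (indRep H ρ) := indLift_mem_repHom hp₁
  have hdisj : Disjoint (LinearMap.ker φ) (LinearMap.ker p₂) :=
    (LinearMap.disjoint_ker.mpr fun w h₁ h₂ => e.map_eq_zero_iff.mp (Prod.ext h₁ h₂)).mono_left
      (ker_indLift_le hp₁)
  have hinj : Function.Injective φ := LinearMap.ker_eq_bot.mp <|
    (hirr.eq_bot_or_exists_extension (ker_le_comap_of_mem_repHom hφ) hp₂ hdisj).resolve_right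
      hnoext
  have : FiniteDimensional ℝ W := Module.Finite.equiv e.symm
  have hev := indEval_injective (ρ := ρ) hidx hg₀
  have : FiniteDimensional ℝ (indSubmodule H ρ) := Module.Finite.of_injective _ hev
  have hdim : finrank ℝ W = finrank ℝ (indSubmodule H ρ) :=
    (LinearMap.finrank_le_finrank_of_injective hinj).antisymm <|
      e.finrank_eq ▸ LinearMap.finrank_le_finrank_of_injective hev
  exact ⟨φ.linearEquivOfInjective hinj hdim, hφ⟩

/-- Let `H` be an index-two normal subgroup of a finite group `K` and `U`
an irreducible real `H`-module with `K`-invariant character that admits no `K`-extension.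
Then every real `K`-module `W` whose restriction to `H` is isomorphic to `2U = U ⊕ U` is
isomorphic to the induced module `Ind_H^K U`. -/
theorem extension_of_double_is_induced {K : Type} [Group K] [Finite K] (H : Subgroup K)
    [H.Normal] (hidx : H.index = 2) {U : Type} [AddCommGroup U] [Module ℝ U]
    [FiniteDimensional ℝ U] (ρ : Representation ℝ H U) (hirr : IsIrreducibleRep ρ)
    (hinv : charConjInvariant H ρ)
    (hnoext : ¬ ∃ σ : Representation ℝ K U, RepIso (resRep H σ) ρ) :
    ∀ (W : Type) [AddCommGroup W] [Module ℝ W] (ψ : Representation ℝ K W),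
      RepIso (resRep H ψ) (doubleRep ρ) → RepIso ψ (indRep H ρ) :=
  extension_of_double_is_induced_general H hidx ρ hirr hnoext
end
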